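/- arXiv:2305.17239 — 2 statements merged into one kernel-verified Lean document; each statement's English description precedes it below -/
import Mathlib

section
/- Let P be a partition of T into three simply connected districts and let w ∈ P_i be a cut vertex of P_i. Then every connected component S of P_i \ {w} contains an exposed vertex x such that P_i \ {x} is simply connected. -/
namespace Redistrict

/-!
Common definitions: the triangular lattice `G_Δ`, the triangular region `T` of side
length `n`, simply connected sets, partitions into three simply connected districts,
recombination moves, the state space `Ω` and the graph `G_Ω`.
-/

/-- The infinite triangular lattice graph `G_Δ` on `ℤ²`: two vertices are adjacent iff
their difference is one of `(1,0),(-1,0),(0,1),(0,-1),(1,-1),(-1,1)`. -/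
def TriLattice : SimpleGraph (ℤ × ℤ) :=
  SimpleGraph.fromRel (fun v w => v - w = (1, 0) ∨ v - w = (0, 1) ∨ v - w = (1, -1))

/-- The triangular region `T` of side length `n`, oriented with a vertical right edge:
column `x` (for `1 ≤ x ≤ n`) consists of the `x` vertices `(x, y)` with `1 - x ≤ y ≤ 0`.
It has `n (n+1) / 2` vertices, `n` on each side. -/
def Tset (n : ℕ) : Set (ℤ × ℤ) :=
  {p | 1 ≤ p.1 ∧ p.1 ≤ (n : ℤ) ∧ 1 - p.1 ≤ p.2 ∧ p.2 ≤ 0}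

/-- The neighborhood `N(v)` of a vertex of the triangular lattice. -/
def nbhd (v : ℤ × ℤ) : Set (ℤ × ℤ) := {w | TriLattice.Adj v w}

/-- The boundary `bd(T)`: vertices of `T` adjacent to some vertex outside `T`. -/
def bdT (n : ℕ) : Set (ℤ × ℤ) :=
  {v ∈ Tset n | ∃ w, TriLattice.Adj v w ∧ w ∉ Tset n}

/-- A corner of `T`: a vertex of `T` with exactly two neighbors in `T`. -/
def IsCorner (n : ℕ) (v : ℤ × ℤ) : Prop :=
  v ∈ Tset n ∧ (nbhd v ∩ Tset n).ncard = 2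

/-- The subgraph of `G_Δ` induced on `S` is connected. -/
def ConnSet (S : Set (ℤ × ℤ)) : Prop := (TriLattice.induce S).Connected

/-- A set of vertices is simply connected if it induces a connected subgraph of `G_Δ`
and its complement induces a connected subgraph of `G_Δ`. -/
def SimplyConn (S : Set (ℤ × ℤ)) : Prop := ConnSet S ∧ ConnSet Sᶜ

/-- A partition of `T` (of side length `n`) into three simply connected districts
`P 0`, `P 1`, `P 2` (the paper's `P_1, P_2, P_3`). -/
structure TriPartition (n : ℕ) where
  P : Fin 3 → Set (ℤ × ℤ)
  disj : ∀ i j : Fin 3, i ≠ j → Disjoint (P i) (P j)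
  cover : (⋃ i, P i) = Tset n
  sc : ∀ i, SimplyConn (P i)

/-- A recombination move: the two partitions differ, and some district of one is
identical to some district of the other. -/
def RecombMove {n : ℕ} (σ τ : TriPartition n) : Prop :=
  σ ≠ τ ∧ ∃ i j : Fin 3, σ.P i = τ.P j

/-- A partition is balanced (w.r.t. ideal sizes `k`) if `|P_i| = k_i` for each `i`. -/
def IsBalanced {n : ℕ} (k : Fin 3 → ℕ) (σ : TriPartition n) : Prop :=
  ∀ i, (σ.P i).ncard = k i

/-- `k_i - 1 ≤ |P_i| ≤ k_i + 1` for each `i`, i.e. balanced or nearly balanced. -/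
def InOmega {n : ℕ} (k : Fin 3 → ℕ) (σ : TriPartition n) : Prop :=
  ∀ i, k i ≤ (σ.P i).ncard + 1 ∧ (σ.P i).ncard ≤ k i + 1

/-- A partition is nearly balanced if it is not balanced but
`k_i - 1 ≤ |P_i| ≤ k_i + 1` for each `i`. -/
def NearlyBalanced {n : ℕ} (k : Fin 3 → ℕ) (σ : TriPartition n) : Prop :=
  ¬ IsBalanced k σ ∧ InOmega k σ

lemma IsBalanced.inOmega {n : ℕ} {k : Fin 3 → ℕ} {σ : TriPartition n}
    (h : IsBalanced k σ) : InOmega k σ := fun i => by have := h i; omega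

/-- The state space `Ω` of all balanced and nearly balanced partitions. -/
abbrev Omega (n : ℕ) (k : Fin 3 → ℕ) : Type := {σ : TriPartition n // InOmega k σ}

/-- The graph `G_Ω` on `Ω` whose edges are the recombination moves. -/
def GOmega (n : ℕ) (k : Fin 3 → ℕ) : SimpleGraph (Omega n k) where
  Adj σ τ := RecombMove σ.val τ.val
  symm := by
    constructor
    intro σ τ h
    obtain ⟨hne, i, j, hij⟩ := h
    exact ⟨Ne.symm hne, j, i, hij.symm⟩
  loopless := by
    constructor
    intro σ h
    obtain ⟨hne, -⟩ := h
    exact hne rfl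

/-- The columns of `T`: `colEq n i` is the `i`-th column `C_i` (vertices with first
coordinate `i`), and `colLT`, `colLE`, `colGT` are `C_{<i}`, `C_{≤i}`, `C_{>i}`. -/
def colEq (n i : ℕ) : Set (ℤ × ℤ) := {p ∈ Tset n | p.1 = (i : ℤ)}

def colLT (n i : ℕ) : Set (ℤ × ℤ) := {p ∈ Tset n | p.1 < (i : ℤ)}

def colLE (n i : ℕ) : Set (ℤ × ℤ) := {p ∈ Tset n | p.1 ≤ (i : ℤ)}

def colGT (n i : ℕ) : Set (ℤ × ℤ) := {p ∈ Tset n | (i : ℤ) < p.1}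

/-- The single leftmost vertex `C_1` of `T`. -/
def c1 : ℤ × ℤ := (1, 0)

/-- A vertex of `P_i` is exposed if it is adjacent to a vertex of `T` in another district. -/
def Exposed {n : ℕ} (σ : TriPartition n) (i : Fin 3) (v : ℤ × ℤ) : Prop :=
  v ∈ σ.P i ∧ ∃ w ∈ Tset n, TriLattice.Adj v w ∧ w ∉ σ.P i

/-- `S` is a connected component of `A`: a nonempty maximal connected subset of `A`. -/
def IsCompOf (S A : Set (ℤ × ℤ)) : Prop :=
  S.Nonempty ∧ S ⊆ A ∧ ConnSet S ∧ ∀ S', S ⊆ S' → S' ⊆ A → ConnSet S' → S' = S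

/-- Reassigning the vertex `v` to district `j` (removing it from the other districts)
yields again a partition of `T` into three simply connected districts. -/
def FlipTo {n : ℕ} (σ : TriPartition n) (v : ℤ × ℤ) (j : Fin 3) : Prop :=
  ∃ τ : TriPartition n, τ.P j = σ.P j ∪ {v} ∧ ∀ l, l ≠ j → τ.P l = σ.P l \ {v}

/-- `τ` is obtained from `σ` by reassigning the single vertex `v` to a new district. -/
def FlipMove {n : ℕ} (σ τ : TriPartition n) (v : ℤ × ℤ) : Prop :=
  ∃ j : Fin 3, v ∉ σ.P j ∧ τ.P j = σ.P j ∪ {v} ∧ ∀ l, l ≠ j → τ.P l = σ.P l \ {v}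

/-- A subset `S` of `P_i` is shrinkable if it contains a vertex that can be removed
from `P_i` and added to a different district, producing a valid partition. -/
def Shrinkable {n : ℕ} (σ : TriPartition n) (i : Fin 3) (S : Set (ℤ × ℤ)) : Prop :=
  ∃ x ∈ S, ∃ j : Fin 3, j ≠ i ∧ FlipTo σ x j

/-- The six unit directions of the triangular lattice. -/
def triDir (d : ℤ × ℤ) : Prop :=
  d = (1, 0) ∨ d = (-1, 0) ∨ d = (0, 1) ∨ d = (0, -1) ∨ d = (1, -1) ∨ d = (-1, 1)

/-- The `l`-th vertex (1-indexed) on the lattice line through `base` with direction `dir`. -/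
def towerVtx (base dir : ℤ × ℤ) (l : ℕ) : ℤ × ℤ := base + ((l : ℤ) - 1) • dir

/-- A tower for the partition `σ`: a sequence `v_1, …, v_t` (`t ≥ 2`) of consecutive
vertices on a straight lattice line such that `v_1` is in the same district as both common
neighbors of `v_1` and `v_2`; no two consecutive tower vertices are in the same district;
for `2 ≤ l ≤ t`, moving `v_l` to the district of `v_{l-1}` does not yield a valid
partition; and the next vertex `v_{t+1}` on the line cannot be appended to the tower. -/
structure Tower (n : ℕ) (σ : TriPartition n) where
  t : ℕ
  base : ℤ × ℤ
  dir : ℤ × ℤ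
  dst : ℕ → Fin 3
  two_le : 2 ≤ t
  dir_mem : triDir dir
  mem : ∀ l, 1 ≤ l → l ≤ t → towerVtx base dir l ∈ σ.P (dst l)
  top : ∀ u, TriLattice.Adj u (towerVtx base dir 1) →
      TriLattice.Adj u (towerVtx base dir 2) → u ∈ σ.P (dst 1)
  alt : ∀ l, 1 ≤ l → l < t → dst l ≠ dst (l + 1)
  stuck : ∀ l, 2 ≤ l → l ≤ t → ¬ FlipTo σ (towerVtx base dir l) (dst (l - 1))
  maximal : ¬ ∃ c : Fin 3, towerVtx base dir (t + 1) ∈ σ.P c ∧ c ≠ dst t ∧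
      ¬ FlipTo σ (towerVtx base dir (t + 1)) (dst t)

/-- A parametrization of the boundary cycle of `T` (of side length `n`), of period
`3(n-1)`: it runs along the top edge, then the right vertical edge, then the hypotenuse. -/
def bdCycleFun (n : ℕ) (t : ℤ) : ℤ × ℤ :=
  let m : ℤ := 3 * ((n : ℤ) - 1)
  let s : ℤ := t % m
  if s < (n : ℤ) - 1 then (1 + s, 0)
  else if s < 2 * ((n : ℤ) - 1) then ((n : ℤ), ((n : ℤ) - 1) - s)
  else (3 * ((n : ℤ) - 1) + 1 - s, 1 - (3 * ((n : ℤ) - 1) + 1 - s))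

/-- A vertex is enclosed by (the vertex set of) a cycle `C` if it is not on `C` and the set
of vertices reachable from it in the lattice avoiding `C` is finite, i.e. it lies in the
bounded region of the plane determined by `C`. -/
def Enclosed (C : Set (ℤ × ℤ)) (u : ℤ × ℤ) : Prop :=
  ∃ hu : u ∈ Cᶜ,
    {w : ℤ × ℤ | ∃ hw : w ∈ Cᶜ, (TriLattice.induce Cᶜ).Reachable ⟨u, hu⟩ ⟨w, hw⟩}.Finite

/-- `N_C(y)`: the neighbors of `y` lying on or inside the cycle with vertex set `C`. -/
def cycNbhd (C : Set (ℤ × ℤ)) (y : ℤ × ℤ) : Set (ℤ × ℤ) :=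
  {w | TriLattice.Adj y w ∧ (w ∈ C ∨ Enclosed C w)}

/-- A triangular face: three mutually adjacent vertices. -/
def TriFace (a b c : ℤ × ℤ) : Prop :=
  TriLattice.Adj a b ∧ TriLattice.Adj b c ∧ TriLattice.Adj a c

/-- Twice the signed area of the triangle `a b c`; its sign gives the orientation
(clockwise vs. counterclockwise) of the triple in the planar embedding. -/
def detOr (a b c : ℤ × ℤ) : ℤ :=
  (b.1 - a.1) * (c.2 - a.2) - (b.2 - a.2) * (c.1 - a.1)


/-!
Let `w` be a vertex of the district `P` and `S` a component of `P \ {w}`, so that every edge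
leaving `S` inside `P` ends at `w`. Some `x ∈ S` is adjacent to a vertex of `T` outside `P`:
otherwise `w` would separate `S` from the other districts in `T`, whereas the neighbours in `T`
of a vertex of `T` form an arc of its hexagon, so `T` has no cut vertex. The complement of
`P \ {x}` is connected, since `x` touches the complement of `P`. If `P \ {x}` is connected, `x`
is the required vertex; otherwise a component of `P \ {x}` avoiding `w` lies in `S \ {x}` and
hangs off `P` at `x` exactly as `S` hangs off at `w`, and we recurse on it.
-/

section ReachIn

variable {V : Type*} (G : SimpleGraph V)

def ReachIn (U : Set V) : V → V → Prop :=
  Relation.ReflTransGen fun a b => a ∈ U ∧ b ∈ U ∧ G.Adj a b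

def Attached (P A : Set V) (p : V) : Prop :=
  ∀ a ∈ A, ∀ b ∈ P, G.Adj a b → b ∈ A ∨ b = p

variable {G} {U : Set V} {a b c : V}

lemma ReachIn.single (ha : a ∈ U) (hb : b ∈ U) (h : G.Adj a b) : ReachIn G U a b :=
  Relation.ReflTransGen.single ⟨ha, hb, h⟩

lemma ReachIn.trans (h : ReachIn G U a b) (h' : ReachIn G U b c) : ReachIn G U a c :=
  Relation.ReflTransGen.trans h h'

lemma ReachIn.symm (h : ReachIn G U a b) : ReachIn G U b a := by
  induction h with
  | refl => exact Relation.ReflTransGen.refl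
  | tail _ hbc ih => exact (ReachIn.single hbc.2.1 hbc.1 hbc.2.2.symm).trans ih

lemma ReachIn.mono {U' : Set V} (hU : U ⊆ U') (h : ReachIn G U a b) : ReachIn G U' a b := by
  induction h with
  | refl => exact Relation.ReflTransGen.refl
  | tail _ hbc ih => exact ih.trans (.single (hU hbc.1) (hU hbc.2.1) hbc.2.2)

lemma ReachIn.reachable (h : ReachIn G U a b) (ha : a ∈ U) (hb : b ∈ U) :
    (G.induce U).Reachable ⟨a, ha⟩ ⟨b, hb⟩ := by
  induction h with
  | refl => rfl
  | tail _ hbc ih => exact (ih hbc.1).trans (SimpleGraph.Adj.reachable hbc.2.2)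

lemma reachIn_of_reachable {a b : U} (h : (G.induce U).Reachable a b) : ReachIn G U a b := by
  obtain ⟨p⟩ := h
  induction p with
  | nil => exact Relation.ReflTransGen.refl
  | cons huv _ ih => exact (ReachIn.single (Subtype.prop _) (Subtype.prop _) huv).trans ih

lemma connected_induce_iff_reachIn :
    (G.induce U).Connected ↔ U.Nonempty ∧ ∀ a ∈ U, ∀ b ∈ U, ReachIn G U a b := by
  refine ⟨fun h => ⟨Set.nonempty_coe_sort.mp h.nonempty, fun a ha b hb =>
    reachIn_of_reachable (h.preconnected ⟨a, ha⟩ ⟨b, hb⟩)⟩, ?_⟩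
  rintro ⟨⟨x, hx⟩, h⟩
  have : Nonempty U := ⟨⟨x, hx⟩⟩
  exact ⟨fun a b => (h a a.2 b b.2).reachable a.2 b.2⟩

lemma connected_induce_of_reachIn (hc : c ∈ U) (h : ∀ a ∈ U, ReachIn G U a c) :
    (G.induce U).Connected :=
  connected_induce_iff_reachIn.mpr ⟨⟨c, hc⟩, fun a ha b hb => (h a ha).trans (h b hb).symm⟩

lemma connected_induce_insert (hU : (G.induce U).Connected) (ha : a ∈ U) (hab : G.Adj a b) :
    (G.induce (insert b U)).Connected := by
  refine connected_induce_of_reachIn (Set.mem_insert_of_mem b ha) ?_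
  rintro c (rfl | hc)
  · exact .single (Set.mem_insert c U) (Set.mem_insert_of_mem c ha) hab.symm
  · exact ((connected_induce_iff_reachIn.mp hU).2 c hc a ha).mono (Set.subset_insert b U)

lemma ReachIn.exists_adj_of_mem_of_notMem {S : Set V} (h : ReachIn G U a b) (ha : a ∈ S)
    (hb : b ∉ S) : ∃ x ∈ S, ∃ y ∈ U, y ∉ S ∧ G.Adj x y := by
  induction h using Relation.ReflTransGen.head_induction_on with
  | refl => exact absurd ha hb
  | @head a c hac _ ih =>
    by_cases hc : c ∈ S
    · exact ih hc
    · exact ⟨a, ha, c, hac.2.1, hc, hac.2.2⟩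

lemma ReachIn.diff_of_attached {A : Set V} (h : ReachIn G U a b) (ha : a ∉ A)
    (hA : Attached G U A b) : ReachIn G (U \ A) a b := by
  induction h using Relation.ReflTransGen.head_induction_on with
  | refl => exact Relation.ReflTransGen.refl
  | @head a c hac hcb ih =>
    by_cases hc : c ∈ A
    · rcases hA c hc a hac.1 hac.2.2.symm with h | rfl
      · exact absurd h ha
      · exact Relation.ReflTransGen.refl
    · exact (ReachIn.single (U := U \ A) ⟨hac.1, ha⟩ ⟨hac.2.1, hc⟩ hac.2.2).trans (ih hc)

variable {P A : Set V} {p : V}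

lemma Attached.exists_adj (hA : Attached G P A p) (hP : (G.induce P).Connected)
    (hAne : A.Nonempty) (hAP : A ⊆ P) (hp : p ∈ P) (hpA : p ∉ A) : ∃ a ∈ A, G.Adj p a := by
  obtain ⟨a₀, ha₀⟩ := hAne
  obtain ⟨a, ha, b, hb, hbA, hab⟩ :=
    ((connected_induce_iff_reachIn.mp hP).2 a₀ (hAP ha₀) p hp).exists_adj_of_mem_of_notMem ha₀ hpA
  rcases hA a ha b hb hab with h | rfl
  · exact absurd h hbA
  · exact ⟨a, ha, hab.symm⟩

lemma Attached.connected_induce_diff (hA : Attached G P A p) (hP : (G.induce P).Connected)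
    (hp : p ∈ P) (hpA : p ∉ A) : (G.induce (P \ A)).Connected :=
  connected_induce_of_reachIn (U := P \ A) ⟨hp, hpA⟩ fun a ha =>
    ((connected_induce_iff_reachIn.mp hP).2 a ha.1 p hp).diff_of_attached ha.2 hA

lemma attached_setOf_reachIn (p c : V) :
    Attached G P {a | a ∈ P \ {p} ∧ ReachIn G (P \ {p}) a c} p := by
  intro a ha b hb hab
  by_cases hbp : b = p
  · exact Or.inr hbp
  · exact Or.inl ⟨⟨hb, hbp⟩, (ReachIn.single (U := P \ {p}) ⟨hb, hbp⟩ ha.1 hab.symm).trans ha.2⟩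

end ReachIn

def dir : Fin 6 → ℤ × ℤ := ![(1, 0), (1, -1), (0, -1), (-1, 0), (-1, 1), (0, 1)]

lemma adj_iff_exists_dir {v w : ℤ × ℤ} : TriLattice.Adj v w ↔ ∃ k, w = v + dir k := by
  obtain ⟨a, b⟩ := v
  obtain ⟨c, d⟩ := w
  simp [TriLattice, dir, Fin.exists_fin_succ, Prod.ext_iff]
  omega

lemma adj_dir_succ (v : ℤ × ℤ) (k : Fin 6) : TriLattice.Adj (v + dir k) (v + dir (k + 1)) := by
  obtain ⟨a, b⟩ := v
  fin_cases k <;> simp [TriLattice, dir, Prod.ext_iff]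

/-- Whether `dir k` leads from a vertex of `T` back into `T`, for a vertex lying on those of the
sides `x = 1`, `x = n`, `x + y = 1`, `y = 0` of `T` that are flagged by `l`, `r`, `d`, `t`:
each such side forbids two consecutive directions. -/
def hexOK (l r d t : Bool) (k : Fin 6) : Bool :=
  !(l && (k == 3 || k == 4)) && !(r && (k == 0 || k == 1)) &&
    !(d && (k == 2 || k == 3)) && !(t && (k == 4 || k == 5))

lemma add_dir_mem_tset_iff {n : ℕ} {v : ℤ × ℤ} (hv : v ∈ Tset n) (k : Fin 6) :
    v + dir k ∈ Tset n ↔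
      hexOK (decide (v.1 = 1)) (decide (v.1 = n)) (decide (v.1 + v.2 = 1)) (decide (v.2 = 0)) k
        = true := by
  obtain ⟨x, y⟩ := v
  obtain ⟨h1, h2, h3, h4⟩ := hv
  simp only at h1 h2 h3 h4
  fin_cases k <;> simp [Tset, hexOK, dir] <;> omega

-- The admissible directions form an arc of the hexagon (given `l → d`, which holds in `T`
-- since `x = 1` forces `y = 0`), so a two-colouring of them that uses both colours changes
-- colour between two consecutive admissible directions.
lemma hexOK_split : ∀ l r d t : Bool, (l → d) → ∀ f : Fin 6 → Bool,
    (∃ k, hexOK l r d t k ∧ f k) → (∃ k, hexOK l r d t k ∧ f k = false) →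
    ∃ k, hexOK l r d t k ∧ hexOK l r d t (k + 1) ∧ f k ≠ f (k + 1) := by
  decide

lemma tset_finite (n : ℕ) : (Tset n).Finite :=
  (Set.finite_Icc ((1 : ℤ), 1 - (n : ℤ)) ((n : ℤ), 0)).subset fun p ⟨h₁, h₂, h₃, h₄⟩ =>
    ⟨⟨h₁, by omega⟩, ⟨h₂, h₄⟩⟩

lemma reachIn_tset_c1 {n : ℕ} {p : ℤ × ℤ} (hp : p ∈ Tset n) : ReachIn TriLattice (Tset n) p c1 := by
  induction hk : (p.1 - 1 - p.2).toNat generalizing p with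
  | zero =>
    obtain ⟨h₁, -, h₃, h₄⟩ := hp
    have : p = c1 := Prod.ext (by simp [c1]; omega) (by simp [c1]; omega)
    exact this ▸ Relation.ReflTransGen.refl
  | succ k ih =>
    obtain ⟨x, y⟩ := p
    obtain ⟨h₁, h₂, h₃, h₄⟩ := hp
    simp only at h₁ h₂ h₃ h₄ hk
    by_cases hy : y = 0
    · subst hy
      have hq : (x - 1, (0 : ℤ)) ∈ Tset n := by refine ⟨?_, ?_, ?_, ?_⟩ <;> simp <;> omega
      exact (ReachIn.single (U := Tset n) ⟨h₁, h₂, h₃, h₄⟩ hq (by simp [TriLattice]; omega)).trans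
        (ih hq (by simp; omega))
    · have hq : (x, y + 1) ∈ Tset n := ⟨h₁, h₂, by simp; omega, by simp; omega⟩
      exact (ReachIn.single (U := Tset n) ⟨h₁, h₂, h₃, h₄⟩ hq (by simp [TriLattice])).trans
        (ih hq (by simp; omega))

lemma reachIn_tset {n : ℕ} {p q : ℤ × ℤ} (hp : p ∈ Tset n) (hq : q ∈ Tset n) :
    ReachIn TriLattice (Tset n) p q :=
  (reachIn_tset_c1 hp).trans (reachIn_tset_c1 hq).symm

lemma exists_adj_of_nbhd_split {n : ℕ} {v a b : ℤ × ℤ} {A : Set (ℤ × ℤ)} (hv : v ∈ Tset n)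
    (hva : TriLattice.Adj v a) (ha : a ∈ Tset n) (haA : a ∈ A)
    (hvb : TriLattice.Adj v b) (hb : b ∈ Tset n) (hbA : b ∉ A) :
    ∃ a' ∈ A, ∃ b' ∈ Tset n, b' ∉ A ∧ TriLattice.Adj v b' ∧ TriLattice.Adj a' b' := by
  classical
  obtain ⟨i, rfl⟩ := adj_iff_exists_dir.mp hva
  obtain ⟨j, rfl⟩ := adj_iff_exists_dir.mp hvb
  rw [add_dir_mem_tset_iff hv] at ha hb
  have hld : v.1 = 1 → v.1 + v.2 = 1 := fun h => by have := hv.2.2.1; have := hv.2.2.2; omega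
  obtain ⟨k, hk, hk₁, hne⟩ := hexOK_split _ _ _ _ (by simpa using hld)
    (fun k => decide (v + dir k ∈ A)) ⟨i, ha, by simpa using haA⟩ ⟨j, hb, by simpa using hbA⟩
  rw [← add_dir_mem_tset_iff hv] at hk hk₁
  by_cases hkA : v + dir k ∈ A
  · exact ⟨_, hkA, _, hk₁, by simp [hkA] at hne; exact hne, adj_iff_exists_dir.mpr ⟨_, rfl⟩,
      adj_dir_succ v k⟩
  · exact ⟨_, by simp [hkA] at hne; exact hne, _, hk, hkA, adj_iff_exists_dir.mpr ⟨_, rfl⟩,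
      (adj_dir_succ v k).symm⟩

lemma Attached.exists_adj_compl {n : ℕ} {P A : Set (ℤ × ℤ)} {p q : ℤ × ℤ}
    (hA : Attached TriLattice P A p) (hPT : P ⊆ Tset n) (hP : ConnSet P) (hAne : A.Nonempty)
    (hAP : A ⊆ P) (hp : p ∈ P) (hpA : p ∉ A) (hq : q ∈ Tset n) (hqP : q ∉ P) :
    ∃ x ∈ A, ∃ b ∈ Tset n, TriLattice.Adj x b ∧ b ∉ P := by
  -- Otherwise `p` would separate `A` from `q` in `T`, but the neighbours of `p` in `T` form an arc.
  by_contra! hclosed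
  have hAT : Attached TriLattice (Tset n) A p := fun a ha b hb hab =>
    hA a ha b (hclosed a ha b hb hab) hab
  obtain ⟨c, hc, b, hb, hbA, hcb⟩ := (reachIn_tset (hPT hp) hq).exists_adj_of_mem_of_notMem
    (Set.mem_insert p A) (by rintro (rfl | h) <;> [exact hqP hp; exact hqP (hAP h)])
  obtain rfl : c = p := hc.resolve_right fun hcA =>
    hbA ((hAT c hcA b hb hcb).elim Or.inr Or.inl)
  obtain ⟨a, ha, hpa⟩ := hA.exists_adj hP hAne hAP hp hpA
  obtain ⟨a', ha', b', hb', hb'A, hcb', hab'⟩ :=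
    exists_adj_of_nbhd_split (hPT hp) hpa (hPT (hAP ha)) ha hcb hb (fun h => hbA (Or.inr h))
  rcases hAT a' ha' b' hb' hab' with h | rfl
  · exact hb'A h
  · exact hcb'.ne rfl

lemma SimplyConn.diff_singleton {P : Set (ℤ × ℤ)} {x b : ℤ × ℤ} (hP : SimplyConn P)
    (hbP : b ∉ P) (hxb : TriLattice.Adj x b) (h : ConnSet (P \ {x})) :
    SimplyConn (P \ {x}) := by
  refine ⟨h, ?_⟩
  rw [ConnSet, Set.compl_sdiff, Set.singleton_union]
  exact connected_induce_insert hP.2 hbP hxb.symm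

theorem Attached.exists_removable {n : ℕ} {P A : Set (ℤ × ℤ)} {p q : ℤ × ℤ}
    (hA : Attached TriLattice P A p) (hPT : P ⊆ Tset n) (hP : SimplyConn P)
    (hq : q ∈ Tset n) (hqP : q ∉ P) (hAne : A.Nonempty) (hAP : A ⊆ P) (hp : p ∈ P)
    (hpA : p ∉ A) :
    ∃ x ∈ A, (∃ b ∈ Tset n, TriLattice.Adj x b ∧ b ∉ P) ∧ SimplyConn (P \ {x}) := by
  induction hk : A.ncard using Nat.strong_induction_on generalizing A p with
  | _ k ih =>
    obtain ⟨x, hxA, b, hb, hxb, hbP⟩ := hA.exists_adj_compl hPT hP.1 hAne hAP hp hpA hq hqP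
    by_cases hconn : ConnSet (P \ {x})
    · exact ⟨x, hxA, ⟨b, hb, hxb, hbP⟩, hP.diff_singleton hbP hxb hconn⟩
    have hpx : p ∈ P \ {x} := ⟨hp, fun h => hpA (h ▸ hxA)⟩
    obtain ⟨u, hu, hup⟩ : ∃ u ∈ P \ {x}, ¬ ReachIn TriLattice (P \ {x}) u p := by
      by_contra! h
      exact hconn (connected_induce_of_reachIn hpx h)
    set C := {a | a ∈ P \ {x} ∧ ReachIn TriLattice (P \ {x}) a u}
    -- `P \ A` is connected and avoids `x`, so it lies in the component of `p`, not in `C`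
    have hCA : C ⊆ A := by
      intro z hz
      by_contra hzA
      have hzp := (connected_induce_iff_reachIn.mp (hA.connected_induce_diff hP.1 hp hpA)).2
        z ⟨hz.1.1, hzA⟩ p ⟨hp, hpA⟩
      exact hup (hz.2.symm.trans (hzp.mono (Set.sdiff_subset_sdiff_right
        (Set.singleton_subset_iff.mpr hxA))))
    have hxC : x ∉ C := fun h => h.1.2 rfl
    have hCk : C.ncard < k := hk ▸ Set.ncard_lt_ncard ⟨hCA, fun h => hxC (h hxA)⟩
      ((tset_finite n).subset (hAP.trans hPT))
    obtain ⟨y, hyC, hy⟩ := ih _ hCk (attached_setOf_reachIn x u) ⟨u, hu, .refl⟩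
      (hCA.trans hAP) (hAP hxA) hxC rfl
    exact ⟨y, hCA hyC, hy⟩

lemma IsCompOf.attached {P S : Set (ℤ × ℤ)} {w : ℤ × ℤ} (hS : IsCompOf S (P \ {w})) :
    Attached TriLattice P S w := by
  intro a ha b hb hab
  by_cases hbw : b = w
  · exact Or.inr hbw
  have hbS : insert b S ⊆ P \ {w} := Set.insert_subset ⟨hb, hbw⟩ hS.2.1
  have hconn := connected_induce_insert hS.2.2.1 ha hab
  exact Or.inl (hS.2.2.2 _ (Set.subset_insert b S) hbS hconn ▸ Set.mem_insert b S)

lemma TriPartition.subset_tset {n : ℕ} (σ : TriPartition n) (i : Fin 3) : σ.P i ⊆ Tset n :=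
  σ.cover ▸ Set.subset_iUnion σ.P i

lemma TriPartition.exists_mem_tset_notMem {n : ℕ} (σ : TriPartition n) (i : Fin 3) :
    ∃ q ∈ Tset n, q ∉ σ.P i := by
  have hi : i + 1 ≠ i := by omega
  obtain ⟨q, hq⟩ := Set.nonempty_coe_sort.mp (σ.sc (i + 1)).1.nonempty
  exact ⟨q, σ.subset_tset _ hq, (σ.disj _ _ hi).notMem_of_mem_left hq⟩

theorem cut_vertex_component_has_removable_general (n : ℕ) (σ : TriPartition n) (i : Fin 3)
    (w : ℤ × ℤ) (hw : w ∈ σ.P i)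
    (S : Set (ℤ × ℤ)) (hS : IsCompOf S (σ.P i \ {w})) :
    ∃ x ∈ S, Exposed σ i x ∧ SimplyConn (σ.P i \ {x}) := by
  obtain ⟨q, hq, hqP⟩ := σ.exists_mem_tset_notMem i
  have hSP : S ⊆ σ.P i := hS.2.1.trans Set.sdiff_subset
  obtain ⟨x, hxS, hx, hxP⟩ := hS.attached.exists_removable (σ.subset_tset i) (σ.sc i) hq hqP
    hS.1 hSP hw (fun h => (hS.2.1 h).2 rfl)
  exact ⟨x, hxS, ⟨hSP hxS, hx⟩, hxP⟩

/-- Lemma 3.9: if `w ∈ P_i` is a cut vertex of `P_i`, then every connected component `S`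
of `P_i \ {w}` contains an exposed vertex `x` such that `P_i \ {x}` is simply connected. -/
theorem cut_vertex_component_has_removable (n : ℕ) (σ : TriPartition n) (i : Fin 3)
    (w : ℤ × ℤ) (hw : w ∈ σ.P i) (hcut : ¬ ConnSet (σ.P i \ {w}))
    (S : Set (ℤ × ℤ)) (hS : IsCompOf S (σ.P i \ {w})) :
    ∃ x ∈ S, Exposed σ i x ∧ SimplyConn (σ.P i \ {x}) :=
  cut_vertex_component_has_removable_general n σ i w hw S hS

end Redistrict
end

section
/- Let P be a partition of T into three simply connected districts and let a, b, c, d be four consecutive vertices along bd(T). Then it is impossible that a, c ∈ P_i and b, d ∈ P_j for districts i ≠ j. -/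
namespace Redistrict

/-!
Join `a` to `c` by a walk inside `P_i` and close it up by a short arc just outside `T` that
passes over `b`. Vertical rays going up from (points next to) `b` and `d` leave `T` at once, so
only the arc can cross them: the ray from `b` is crossed once, the ray from `d` not at all. The
parity of the number of crossings does not change along a lattice step that avoids the closed
walk (a mod-2 Jordan curve theorem), so no walk inside `P_j` joins `b` to `d`. Rotating `T` by
`120°` brings `b` to the top edge.
-/

theorem triLattice_adj_iff {u v : ℤ × ℤ} : TriLattice.Adj u v ↔
    (v.1 = u.1 + 1 ∧ v.2 = u.2) ∨ (v.1 = u.1 - 1 ∧ v.2 = u.2) ∨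
    (v.1 = u.1 ∧ v.2 = u.2 + 1) ∨ (v.1 = u.1 ∧ v.2 = u.2 - 1) ∨
    (v.1 = u.1 + 1 ∧ v.2 = u.2 - 1) ∨ (v.1 = u.1 - 1 ∧ v.2 = u.2 + 1) := by
  simp only [TriLattice, SimpleGraph.fromRel_adj, Prod.ext_iff, Prod.fst_sub, Prod.snd_sub, ne_eq]
  omega

theorem _root_.SimpleGraph.Walk.sum_darts_sub {V M : Type*} [AddCommGroup M] {G : SimpleGraph V}
    (f : V → M) {u v : V} (p : G.Walk u v) :
    (p.darts.map fun d => f d.snd - f d.fst).sum = f v - f u := by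
  induction p with
  | nil => simp
  | cons h p ih => simp [ih]

theorem _root_.ZMod.ite_add_ite_eq_ite_sub_ite {p q r s : Prop} [Decidable p] [Decidable q]
    [Decidable r] [Decidable s] (h : (p ↔ q) ↔ (r ↔ s)) :
    ((if p then 1 else 0) + (if q then 1 else 0) : ZMod 2) =
      (if s then 1 else 0) - (if r then 1 else 0) := by
  split_ifs <;> simp_all <;> decide

theorem _root_.Int.emod_eq_of_eq_add_mul {a b r q : ℤ} (h : a = r + b * q) (h₀ : 0 ≤ r)
    (h₁ : r < b) : a % b = r := by
  rw [h, Int.add_mul_emod_self_left, Int.emod_eq_of_lt h₀ h₁]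

/-- The edge `uv` crosses the vertical ray going up from the point `z + (ε, ε)`, for a
small `ε > 0`, in the embedding of `G_Δ` with straight edges between the points of `ℤ²`. -/
def CrossesRay (z u v : ℤ × ℤ) : Prop :=
  (u.1 = z.1 ∧ v.1 = z.1 + 1 ∧ z.2 < u.2) ∨ (v.1 = z.1 ∧ u.1 = z.1 + 1 ∧ z.2 < v.2)

instance (z u v : ℤ × ℤ) : Decidable (CrossesRay z u v) := by
  unfold CrossesRay; infer_instance

/-- For a closed walk this is its winding number around `z + (ε, ε)`, mod 2. -/
def rayParity (z : ℤ × ℤ) {u v : ℤ × ℤ} (p : TriLattice.Walk u v) : ZMod 2 :=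
  (p.darts.map fun d => if CrossesRay z d.fst d.snd then 1 else 0).sum

@[simp] theorem rayParity_nil (z u : ℤ × ℤ) : rayParity z (.nil : TriLattice.Walk u u) = 0 := rfl

@[simp] theorem rayParity_cons (z : ℤ × ℤ) {u v w : ℤ × ℤ} (h : TriLattice.Adj u v)
    (p : TriLattice.Walk v w) :
    rayParity z (.cons h p) = (if CrossesRay z u v then 1 else 0) + rayParity z p := by
  simp [rayParity]

@[simp] theorem rayParity_append (z : ℤ × ℤ) {u v w : ℤ × ℤ} (p : TriLattice.Walk u v)
    (q : TriLattice.Walk v w) : rayParity z (p.append q) = rayParity z p + rayParity z q := by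
  simp [rayParity]

/-- The vertices swept over by the ray from `z` when `z` moves one step to `z'` to the right
or up. -/
def rayStrip (z z' : ℤ × ℤ) : Set (ℤ × ℤ) := {w | z.1 < z'.1 ∧ w.1 = z'.1 ∧ z'.2 < w.2}

theorem crossesRay_iff_crossesRay_iff {z z' u v : ℤ × ℤ}
    (hstep : z' - z = (1, 0) ∨ z' - z = (0, 1) ∨ z' - z = (1, -1)) (huv : TriLattice.Adj u v)
    (hu : u ≠ z ∧ u ≠ z') (hv : v ≠ z ∧ v ≠ z') :
    (CrossesRay z u v ↔ CrossesRay z' u v) ↔ (u ∈ rayStrip z z' ↔ v ∈ rayStrip z z') := by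
  simp only [Prod.ext_iff, Prod.fst_sub, Prod.snd_sub, ne_eq] at hstep hu hv
  rw [triLattice_adj_iff] at huv
  simp only [CrossesRay, rayStrip, Set.mem_ofPred_eq]
  rcases hstep with ⟨h1, h2⟩ | ⟨h1, h2⟩ | ⟨h1, h2⟩ <;>
  rcases huv with ⟨h3, h4⟩ | ⟨h3, h4⟩ | ⟨h3, h4⟩ | ⟨h3, h4⟩ | ⟨h3, h4⟩ | ⟨h3, h4⟩ <;>
  omega

theorem rayParity_eq_of_step {a z z' : ℤ × ℤ} (C : TriLattice.Walk a a)
    (hstep : z' - z = (1, 0) ∨ z' - z = (0, 1) ∨ z' - z = (1, -1))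
    (hz : z ∉ C.support) (hz' : z' ∉ C.support) : rayParity z C = rayParity z' C := by
  classical
  let f : ℤ × ℤ → ZMod 2 := fun w => if w ∈ rayStrip z z' then 1 else 0
  have hdart : ∀ d ∈ C.darts, ((if CrossesRay z d.fst d.snd then 1 else 0) +
      (if CrossesRay z' d.fst d.snd then 1 else 0) : ZMod 2) = f d.snd - f d.fst := by
    intro d hd
    have hfst := C.dart_fst_mem_support_of_mem_darts hd
    have hsnd := C.dart_snd_mem_support_of_mem_darts hd
    exact ZMod.ite_add_ite_eq_ite_sub_ite (crossesRay_iff_crossesRay_iff hstep d.adj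
      ⟨ne_of_mem_of_not_mem hfst hz, ne_of_mem_of_not_mem hfst hz'⟩
      ⟨ne_of_mem_of_not_mem hsnd hz, ne_of_mem_of_not_mem hsnd hz'⟩)
  -- a closed walk enters and leaves `rayStrip z z'` equally often
  rw [← CharTwo.add_eq_zero, rayParity, rayParity, ← List.sum_map_add,
    List.map_congr_left hdart, SimpleGraph.Walk.sum_darts_sub, sub_self]

theorem rayParity_eq_of_adj {a z z' : ℤ × ℤ} (C : TriLattice.Walk a a) (h : TriLattice.Adj z z')
    (hz : z ∉ C.support) (hz' : z' ∉ C.support) : rayParity z C = rayParity z' C := by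
  unfold TriLattice at h
  rcases (SimpleGraph.fromRel_adj _ _ _).1 h with ⟨-, hstep | hstep⟩
  · exact (rayParity_eq_of_step C hstep hz' hz).symm
  · exact rayParity_eq_of_step C hstep hz hz'

theorem ConnSet.exists_walk {S : Set (ℤ × ℤ)} (h : ConnSet S) {x y : ℤ × ℤ} (hx : x ∈ S)
    (hy : y ∈ S) : ∃ p : TriLattice.Walk x y, ∀ w ∈ p.support, w ∈ S := by
  obtain ⟨p⟩ := h.preconnected ⟨x, hx⟩ ⟨y, hy⟩
  refine ⟨p.map (SimpleGraph.Embedding.induce S).toHom, ?_⟩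
  intro w hw
  have hw' : w ∈ p.support.map (SimpleGraph.Embedding.induce S).toHom :=
    SimpleGraph.Walk.support_map _ p ▸ hw
  obtain ⟨w, -, rfl⟩ := List.mem_map.1 hw'
  exact w.2

theorem ConnSet.apply_eq_of_forall_adj {α : Type*} {S : Set (ℤ × ℤ)} (h : ConnSet S)
    {f : ℤ × ℤ → α} (hf : ∀ u ∈ S, ∀ v ∈ S, TriLattice.Adj u v → f u = f v) {x y : ℤ × ℤ}
    (hx : x ∈ S) (hy : y ∈ S) : f x = f y := by
  obtain ⟨p, hp⟩ := h.exists_walk hx hy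
  clear hx hy
  induction p with
  | nil => rfl
  | cons huv p ih =>
    simp only [SimpleGraph.Walk.support_cons, List.mem_cons, forall_eq_or_imp] at hp
    exact (hf _ hp.1 _ (hp.2 _ p.start_mem_support) huv).trans (ih hp.2)

theorem ConnSet.image {f : ℤ × ℤ → ℤ × ℤ}
    (hf : ∀ u v, TriLattice.Adj u v → TriLattice.Adj (f u) (f v)) {S : Set (ℤ × ℤ)}
    (h : ConnSet S) : ConnSet (f '' S) := by
  refine h.map ⟨fun x => ⟨f x.1, x.1, x.2, rfl⟩, fun huv => hf _ _ huv⟩ ?_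
  rintro ⟨_, x, hx, rfl⟩
  exact ⟨⟨x, hx⟩, rfl⟩

/-- Mod-2 Jordan curve theorem. -/
theorem rayParity_eq_of_connSet {a z z' : ℤ × ℤ} (C : TriLattice.Walk a a) {S : Set (ℤ × ℤ)}
    (hS : ConnSet S) (hC : ∀ w ∈ C.support, w ∉ S) (hz : z ∈ S) (hz' : z' ∈ S) :
    rayParity z C = rayParity z' C :=
  hS.apply_eq_of_forall_adj (fun _ hu _ hv huv =>
    rayParity_eq_of_adj C huv (fun h => hC _ h hu) (fun h => hC _ h hv)) hz hz'

theorem rayParity_eq_zero_of_support_subset_Tset {n : ℕ} {u v z : ℤ × ℤ}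
    (p : TriLattice.Walk u v) (hp : ∀ w ∈ p.support, w ∈ Tset n) (hz : 0 ≤ z.2 ∨ (n : ℤ) ≤ z.1) :
    rayParity z p = 0 := by
  refine List.sum_eq_zero fun x hx => ?_
  obtain ⟨d, hd, rfl⟩ := List.mem_map.1 hx
  have hfst := hp _ (p.dart_fst_mem_support_of_mem_darts hd)
  have hsnd := hp _ (p.dart_snd_mem_support_of_mem_darts hd)
  simp only [Tset, Set.mem_ofPred_eq] at hfst hsnd
  rw [if_neg]
  unfold CrossesRay
  omega

theorem bdCycleFun_eq_of_eq_add_mul {n : ℕ} {t s : ℤ} (q : ℤ) (ht : t = s + 3 * ((n : ℤ) - 1) * q)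
    (hs₀ : 0 ≤ s) (hs : s < 3 * ((n : ℤ) - 1)) :
    bdCycleFun n t = if s < (n : ℤ) - 1 then (1 + s, 0)
      else if s < 2 * ((n : ℤ) - 1) then ((n : ℤ), ((n : ℤ) - 1) - s)
      else (3 * ((n : ℤ) - 1) + 1 - s, 1 - (3 * ((n : ℤ) - 1) + 1 - s)) := by
  simp only [bdCycleFun, Int.emod_eq_of_eq_add_mul ht hs₀ hs]

theorem bdCycleFun_add_period (n : ℕ) (t : ℤ) :
    bdCycleFun n (t + 3 * ((n : ℤ) - 1)) = bdCycleFun n t := by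
  simp only [bdCycleFun, Int.add_emod_right]

/-- The rotation of `T` by `120°`: `(1, 0) ↦ (n, 0) ↦ (n, 1 - n) ↦ (1, 0)`. -/
def rotPt (n : ℕ) (p : ℤ × ℤ) : ℤ × ℤ := (p.2 + n, 1 - p.1 - p.2)

theorem rotPt_injective (n : ℕ) : Function.Injective (rotPt n) := by
  intro p p' h
  simp only [rotPt, Prod.mk.injEq] at h
  ext <;> omega

theorem rotPt_adj {n : ℕ} {u v : ℤ × ℤ} (h : TriLattice.Adj u v) :
    TriLattice.Adj (rotPt n u) (rotPt n v) := by
  rw [triLattice_adj_iff] at h ⊢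
  simp only [rotPt]
  omega

theorem rotPt_mem_Tset {n : ℕ} {p : ℤ × ℤ} (hp : p ∈ Tset n) : rotPt n p ∈ Tset n := by
  simp only [Tset, rotPt, Set.mem_ofPred_eq] at hp ⊢
  omega

theorem rotPt_bdCycleFun {n : ℕ} (hn : 2 ≤ n) (u : ℤ) :
    rotPt n (bdCycleFun n u) = bdCycleFun n (u + (n - 1)) := by
  have hn' : (2 : ℤ) ≤ n := by exact_mod_cast hn
  have hu := (Int.emod_add_mul_ediv u (3 * ((n : ℤ) - 1))).symm
  have hs₀ := Int.emod_nonneg u (by omega : 3 * ((n : ℤ) - 1) ≠ 0)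
  have hs := Int.emod_lt_of_pos u (by omega : 0 < 3 * ((n : ℤ) - 1))
  rw [bdCycleFun_eq_of_eq_add_mul _ hu hs₀ hs]
  by_cases hwrap : u % (3 * ((n : ℤ) - 1)) + (n - 1) < 3 * ((n : ℤ) - 1)
  · rw [bdCycleFun_eq_of_eq_add_mul (u / (3 * ((n : ℤ) - 1)))
      (s := u % (3 * ((n : ℤ) - 1)) + (n - 1)) (by linear_combination hu) (by omega) hwrap]
    split_ifs <;> simp only [rotPt, Prod.mk.injEq] <;> omega
  · rw [bdCycleFun_eq_of_eq_add_mul (u / (3 * ((n : ℤ) - 1)) + 1)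
      (s := u % (3 * ((n : ℤ) - 1)) + (n - 1) - 3 * ((n : ℤ) - 1)) (by linear_combination hu)
      (by omega) (by omega)]
    split_ifs <;> simp only [rotPt, Prod.mk.injEq] <;> omega

theorem Tset_subsingleton {n : ℕ} (hn : n ≤ 1) : (Tset n).Subsingleton := by
  intro p hp p' hp'
  simp only [Tset, Set.mem_ofPred_eq] at hp hp'
  ext <;> omega

structure IsDistrictPair (n : ℕ) (P Q : Set (ℤ × ℤ)) : Prop where
  left_subset : P ⊆ Tset n
  right_subset : Q ⊆ Tset n
  disjoint : Disjoint P Q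
  connSet_left : ConnSet P
  connSet_right : ConnSet Q

def AlternatesAt (n : ℕ) (P Q : Set (ℤ × ℤ)) (t : ℤ) : Prop :=
  bdCycleFun n t ∈ P ∧ bdCycleFun n (t + 1) ∈ Q ∧ bdCycleFun n (t + 2) ∈ P ∧
    bdCycleFun n (t + 3) ∈ Q

section DistrictPair

variable {n : ℕ} {P Q : Set (ℤ × ℤ)}

theorem TriPartition.isDistrictPair (σ : TriPartition n) {i j : Fin 3} (hij : i ≠ j) :
    IsDistrictPair n (σ.P i) (σ.P j) where
  left_subset := σ.cover ▸ Set.subset_iUnion σ.P i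
  right_subset := σ.cover ▸ Set.subset_iUnion σ.P j
  disjoint := σ.disj i j hij
  connSet_left := (σ.sc i).1
  connSet_right := (σ.sc j).1

/-- Closing a walk from `a` to `c` inside `P` by `arc` gives a closed walk that `Q` avoids; its
part inside `T` does not meet the rays from `b` and `d`. -/
theorem IsDistrictPair.rayParity_eq_of_arc (h : IsDistrictPair n P Q)
    {a b c d : ℤ × ℤ} (ha : a ∈ P) (hb : b ∈ Q) (hc : c ∈ P) (hd : d ∈ Q)
    (arc : TriLattice.Walk c a) (harc : ∀ w ∈ arc.support, w ∈ P ∨ w ∉ Tset n)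
    (hb' : 0 ≤ b.2 ∨ (n : ℤ) ≤ b.1) (hd' : 0 ≤ d.2 ∨ (n : ℤ) ≤ d.1) :
    rayParity b arc = rayParity d arc := by
  obtain ⟨p, hp⟩ := h.connSet_left.exists_walk ha hc
  have hpT : ∀ w ∈ p.support, w ∈ Tset n := fun w hw => h.left_subset (hp w hw)
  have hC : ∀ w ∈ (p.append arc).support, w ∉ Q := by
    intro w hw hwQ
    rcases (SimpleGraph.Walk.mem_support_append_iff _ _).1 hw with hw | hw
    · exact Set.disjoint_left.1 h.disjoint (hp w hw) hwQ
    · rcases harc w hw with hwP | hwT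
      · exact Set.disjoint_left.1 h.disjoint hwP hwQ
      · exact hwT (h.right_subset hwQ)
  have := rayParity_eq_of_connSet (p.append arc) h.connSet_right hC hb hd
  rwa [rayParity_append, rayParity_append, rayParity_eq_zero_of_support_subset_Tset p hpT hb',
    rayParity_eq_zero_of_support_subset_Tset p hpT hd', zero_add, zero_add] at this

theorem IsDistrictPair.false_of_top_row (h : IsDistrictPair n P Q)
    {b₁ : ℤ} {d : ℤ × ℤ} (ha : (b₁ - 1, 0) ∈ P) (hb : (b₁, 0) ∈ Q) (hc : (b₁ + 1, 0) ∈ P)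
    (hd : d ∈ Q) (hd₁ : b₁ < d.1) (hd₂ : 0 ≤ d.2 ∨ (n : ℤ) ≤ d.1) : False := by
  -- only the first edge of the arc crosses the ray from `b`, none the ray from `d`
  let arc : TriLattice.Walk (b₁ + 1, 0) (b₁ - 1, 0) :=
    .cons (v := (b₁, 1)) (triLattice_adj_iff.2 (by omega)) <|
    .cons (v := (b₁ - 1, 1)) (triLattice_adj_iff.2 (by omega)) <|
    .cons (triLattice_adj_iff.2 (by omega)) .nil
  have harc : ∀ w ∈ arc.support, w ∈ P ∨ w ∉ Tset n := by
    simp only [arc, SimpleGraph.Walk.support_cons, SimpleGraph.Walk.support_nil, List.mem_cons,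
      List.not_mem_nil, or_false]
    rintro w (rfl | rfl | rfl | rfl)
    · exact .inl hc
    · exact .inr fun hw => by simp [Tset] at hw
    · exact .inr fun hw => by simp [Tset] at hw
    · exact .inl ha
  have := h.rayParity_eq_of_arc ha hb hc hd arc harc (.inl le_rfl) hd₂
  simp only [arc, rayParity_cons, rayParity_nil] at this
  simp (disch := (unfold CrossesRay; omega)) only [if_pos, if_neg] at this
  exact absurd this (by decide)

theorem IsDistrictPair.false_of_top_corner
    (h : IsDistrictPair n P Q) {d : ℤ × ℤ} (ha : (2, -1) ∈ P) (hb : (1, 0) ∈ Q)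
    (hc : (2, 0) ∈ P) (hd : d ∈ Q) (hd₁ : 1 < d.1) (hd₂ : 0 ≤ d.2 ∨ (n : ℤ) ≤ d.1) : False := by
  let arc : TriLattice.Walk (2, 0) (2, -1) :=
    .cons (v := (1, 1)) (triLattice_adj_iff.2 (by omega)) <|
    .cons (v := (0, 1)) (triLattice_adj_iff.2 (by omega)) <|
    .cons (v := (0, 0)) (triLattice_adj_iff.2 (by omega)) <|
    .cons (v := (1, -1)) (triLattice_adj_iff.2 (by omega)) <|
    .cons (triLattice_adj_iff.2 (by omega)) .nil
  have harc : ∀ w ∈ arc.support, w ∈ P ∨ w ∉ Tset n := by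
    simp only [arc, SimpleGraph.Walk.support_cons, SimpleGraph.Walk.support_nil, List.mem_cons,
      List.not_mem_nil, or_false]
    rintro w (rfl | rfl | rfl | rfl | rfl | rfl)
    · exact .inl hc
    all_goals first | exact .inl ha | exact .inr fun hw => by simp [Tset] at hw
  have := h.rayParity_eq_of_arc ha hb hc hd arc harc (.inl le_rfl) hd₂
  simp only [arc, rayParity_cons, rayParity_nil] at this
  simp (disch := (unfold CrossesRay; omega)) only [if_pos, if_neg] at this
  exact absurd this (by decide)

theorem IsDistrictPair.not_alternatesAt_of_top_row
    (h : IsDistrictPair n P Q) (hn : 3 ≤ n) {t : ℤ}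
    (ht : (t + 1) % (3 * ((n : ℤ) - 1)) < (n : ℤ) - 1) : ¬AlternatesAt n P Q t := by
  rintro ⟨ha, hb, hc, hd⟩
  have hn' : (3 : ℤ) ≤ n := by exact_mod_cast hn
  obtain ⟨s, q, hts, hs₀, hs⟩ : ∃ s q, t + 1 = s + 3 * ((n : ℤ) - 1) * q ∧ 0 ≤ s ∧ s < n - 1 :=
    ⟨_, _, (Int.emod_add_mul_ediv (t + 1) (3 * ((n : ℤ) - 1))).symm,
      Int.emod_nonneg _ (by omega), ht⟩
  rw [bdCycleFun_eq_of_eq_add_mul q hts hs₀ (by omega), if_pos hs] at hb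
  have hc' : bdCycleFun n (t + 2) = (1 + s + 1, 0) := by
    rw [bdCycleFun_eq_of_eq_add_mul q (s := s + 1) (by omega) (by omega) (by omega)]
    split_ifs <;> simp only [Prod.mk.injEq, and_true] <;> omega
  have hd' : 1 + s < (bdCycleFun n (t + 3)).1 ∧
      (0 ≤ (bdCycleFun n (t + 3)).2 ∨ (n : ℤ) ≤ (bdCycleFun n (t + 3)).1) := by
    rw [bdCycleFun_eq_of_eq_add_mul q (s := s + 2) (by omega) (by omega) (by omega)]
    split_ifs <;> omega
  rw [hc'] at hc
  rcases eq_or_lt_of_le hs₀ with rfl | hs₁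
  · rw [bdCycleFun_eq_of_eq_add_mul (q - 1) (s := 3 * ((n : ℤ) - 1) - 1)
      (by linear_combination hts) (by omega) (by omega), if_neg (by omega), if_neg (by omega)] at ha
    exact h.false_of_top_corner (by convert ha using 2 <;> ring) (by simpa using hb)
      (by simpa using hc) hd (by omega) hd'.2
  · rw [bdCycleFun_eq_of_eq_add_mul q (s := s - 1) (by omega) (by omega) (by omega),
      if_pos (by omega)] at ha
    exact h.false_of_top_row (by simpa using ha) hb hc hd hd'.1 hd'.2

theorem IsDistrictPair.image_rotPt (h : IsDistrictPair n P Q) :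
    IsDistrictPair n (rotPt n '' P) (rotPt n '' Q) where
  left_subset := Set.image_subset_iff.2 fun _ hp => rotPt_mem_Tset (h.left_subset hp)
  right_subset := Set.image_subset_iff.2 fun _ hq => rotPt_mem_Tset (h.right_subset hq)
  disjoint := (Set.disjoint_image_iff (rotPt_injective n)).2 h.disjoint
  connSet_left := h.connSet_left.image fun _ _ => rotPt_adj
  connSet_right := h.connSet_right.image fun _ _ => rotPt_adj

theorem AlternatesAt.image_rotPt (hn : 2 ≤ n) {t : ℤ}
    (h : AlternatesAt n P Q t) : AlternatesAt n (rotPt n '' P) (rotPt n '' Q) (t + (n - 1)) := by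
  have hrot : ∀ (k : ℤ) (S : Set (ℤ × ℤ)), bdCycleFun n (t + k) ∈ S →
      bdCycleFun n (t + (n - 1) + k) ∈ rotPt n '' S := fun k S hk => by
    rw [add_right_comm, ← rotPt_bdCycleFun hn]
    exact Set.mem_image_of_mem _ hk
  exact ⟨by simpa using hrot 0 P (by simpa using h.1), hrot 1 Q h.2.1, hrot 2 P h.2.2.1,
    hrot 3 Q h.2.2.2⟩

theorem IsDistrictPair.not_alternatesAt (h : IsDistrictPair n P Q) (t : ℤ) :
    ¬AlternatesAt n P Q t := by
  intro hat
  obtain hn | rfl | hn : n ≤ 1 ∨ n = 2 ∨ 3 ≤ n := by omega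
  · have hab := Tset_subsingleton hn (h.left_subset hat.1) (h.right_subset hat.2.1)
    exact Set.disjoint_left.1 h.disjoint hat.1 (hab ▸ hat.2.1)
  · have had : bdCycleFun 2 (t + 3) = bdCycleFun 2 t := bdCycleFun_add_period 2 t
    exact Set.disjoint_left.1 h.disjoint hat.1 (had ▸ hat.2.2.2)
  · have hn' : (3 : ℤ) ≤ n := by exact_mod_cast hn
    set m := 3 * ((n : ℤ) - 1) with hm
    set s := (t + 1) % m
    have ht : t + 1 = s + m * ((t + 1) / m) := (Int.emod_add_mul_ediv _ _).symm
    have hs₀ : 0 ≤ s := Int.emod_nonneg _ (by omega)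
    have hs : s < m := Int.emod_lt_of_pos _ (by omega)
    by_cases htop : s < n - 1
    · exact h.not_alternatesAt_of_top_row hn htop hat
    -- one rotation brings the hypotenuse to the top edge, two bring the right edge there
    have hrot := hat.image_rotPt (by omega)
    by_cases hhyp : 2 * ((n : ℤ) - 1) ≤ s
    · refine h.image_rotPt.not_alternatesAt_of_top_row hn ?_ hrot
      rw [Int.emod_eq_of_eq_add_mul (r := s - 2 * ((n : ℤ) - 1)) (q := (t + 1) / m + 1)
        (by linear_combination ht + hm) (by omega) (by omega)]
      omega
    · refine h.image_rotPt.image_rotPt.not_alternatesAt_of_top_row hn ?_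
        (hrot.image_rotPt (by omega))
      rw [Int.emod_eq_of_eq_add_mul (r := s - ((n : ℤ) - 1)) (q := (t + 1) / m + 1)
        (by linear_combination ht + hm) (by omega) (by omega)]
      omega

end DistrictPair

/-- Lemma 4.1: for four consecutive vertices `a, b, c, d` along the boundary cycle of `T`,
it is impossible that `a, c ∈ P_i` and `b, d ∈ P_j` with `i ≠ j`. -/
theorem no_boundary_alternation (n : ℕ) (σ : TriPartition n) (i j : Fin 3) (hij : i ≠ j)
    (t : ℤ)
    (ha : bdCycleFun n t ∈ σ.P i) (hb : bdCycleFun n (t + 1) ∈ σ.P j)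
    (hc : bdCycleFun n (t + 2) ∈ σ.P i) (hd : bdCycleFun n (t + 3) ∈ σ.P j) :
    False :=
  (σ.isDistrictPair hij).not_alternatesAt t ⟨ha, hb, hc, hd⟩

end Redistrict
end
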